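/- Let g be a finite simple graph, k a natural number, S ⊆ V(g), and let π_1, …, π_c be a partition of V(g)\S into independent sets of g. For each i, enumerate π_i as v_{i,1}, …, v_{i,|π_i|} in non-decreasing order of |N̄_S(·)|. Then for every k-defective clique C of g with S ⊆ C ⊆ V(g), writing s_i = |C ∩ π_i|, the number of non-edges of C satisfies |Ē(C)| ≥ |Ē(S)| + ∑_{i=1}^{c} ( s_i(s_i − 1)/2 + ∑_{j=1}^{s_i} |N̄_S(v_{i,j})| ). -/

import Mathlib

open Finset

variable {V : Type*} [Fintype V] [DecidableEq V]

/-- The set of non-edges of `S`: unordered pairs of distinct vertices of `S`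
that are not adjacent in `G`. -/
def nonEdges (G : SimpleGraph V) [DecidableRel G.Adj] (S : Finset V) : Finset (Sym2 V) :=
  ((S ×ˢ S).filter fun p => p.1 ≠ p.2 ∧ ¬ G.Adj p.1 p.2).image fun p => s(p.1, p.2)

/-- The set of non-neighbors of `u` among `S \ {u}`. -/
def nonNbrs (G : SimpleGraph V) [DecidableRel G.Adj] (S : Finset V) (u : V) : Finset V :=
  (S.erase u).filter fun w => ¬ G.Adj u w

/-!
Adding a vertex `v ∉ A` to `A` creates exactly `|N̄_A(v)|` new non-edges. Summing this over
the vertices of `T` splits the non-edges of `S ∪ T` (for disjoint `S`, `T`) into those inside `S`,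
those inside `T`, and `∑_{v ∈ T} |N̄_S(v)|` across. Peeling the parts `C ∩ π i` off
`C = S ∪ ⋃ i, C ∩ π i` one at a time gives the bound: each part is independent, so all of its
`s_i (s_i - 1) / 2` pairs are non-edges, and its cross term with `S` is at least the sum of the
`s_i` smallest values of `|N̄_S|` on `π i`.
-/

lemma Monotone.sum_filter_lt_card_le_sum {n : ℕ} {f : Fin n → ℕ} (hf : Monotone f) (T : Finset (Fin n)) :
    ∑ j ∈ univ.filter (fun j : Fin n => (j : ℕ) < #T), f j ≤ ∑ j ∈ T, f j := by
  induction T using Finset.induction_on_max with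
  | empty => simp
  | insert a T hlt ih =>
    have hTa : #T ≤ a := by
      simpa using card_le_card (t := Iio a) fun x hx => mem_Iio.2 (hlt x hx)
    have hfilter : univ.filter (fun j : Fin n => (j : ℕ) < #T + 1)
        = insert ⟨#T, by omega⟩ (univ.filter fun j : Fin n => (j : ℕ) < #T) := by
      ext j
      simp only [mem_filter, mem_univ, true_and, mem_insert, Fin.ext_iff]
      omega
    have haT : a ∉ T := fun h => lt_irrefl a (hlt a h)
    rw [card_insert_of_notMem haT, hfilter, sum_insert (by simp), sum_insert haT]
    exact add_le_add (hf (Fin.le_def.2 hTa)) ih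

section

omit [Fintype V]

lemma mem_nonEdges {G : SimpleGraph V} [DecidableRel G.Adj] {S : Finset V} {x y : V} :
    s(x, y) ∈ nonEdges G S ↔ x ∈ S ∧ y ∈ S ∧ x ≠ y ∧ ¬ G.Adj x y := by
  simp only [nonEdges, mem_image, mem_filter, mem_product, Prod.exists, Sym2.eq_iff]
  constructor
  · rintro ⟨a, b, ⟨⟨ha, hb⟩, hne, hadj⟩, ⟨rfl, rfl⟩ | ⟨rfl, rfl⟩⟩
    · exact ⟨ha, hb, hne, hadj⟩
    · exact ⟨hb, ha, hne.symm, fun h => hadj h.symm⟩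
  · rintro ⟨hx, hy, hne, hadj⟩
    exact ⟨x, y, ⟨⟨hx, hy⟩, hne, hadj⟩, .inl ⟨rfl, rfl⟩⟩

lemma mem_nonNbrs {G : SimpleGraph V} [DecidableRel G.Adj] {S : Finset V} {u w : V} :
    w ∈ nonNbrs G S u ↔ w ∈ S ∧ w ≠ u ∧ ¬ G.Adj u w := by
  simp only [nonNbrs, mem_filter, mem_erase]
  tauto

variable (G : SimpleGraph V) [DecidableRel G.Adj]

lemma nonEdges_insert {A : Finset V} {v : V} (hv : v ∉ A) :
    nonEdges G (insert v A) = nonEdges G A ∪ (nonNbrs G A v).image (s(v, ·)) := by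
  ext e
  induction e using Sym2.ind with
  | _ x y =>
    simp only [mem_union, mem_image, mem_nonEdges, mem_nonNbrs, mem_insert, Sym2.eq_iff]
    constructor
    · rintro ⟨rfl | hx, rfl | hy, hne, hadj⟩
      · exact absurd rfl hne
      · exact .inr ⟨y, ⟨hy, fun h => hne h.symm, hadj⟩, .inl ⟨rfl, rfl⟩⟩
      · exact .inr ⟨x, ⟨hx, hne, fun h => hadj h.symm⟩, .inr ⟨rfl, rfl⟩⟩
      · exact .inl ⟨hx, hy, hne, hadj⟩
    · rintro (⟨hx, hy, hne, hadj⟩ | ⟨w, ⟨hw, hwv, hadj⟩, ⟨rfl, rfl⟩ | ⟨rfl, rfl⟩⟩)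
      · exact ⟨.inr hx, .inr hy, hne, hadj⟩
      · exact ⟨.inl rfl, .inr hw, hwv.symm, hadj⟩
      · exact ⟨.inr hw, .inl rfl, hwv, fun h => hadj h.symm⟩

lemma card_nonEdges_insert {A : Finset V} {v : V} (hv : v ∉ A) :
    #(nonEdges G (insert v A)) = #(nonEdges G A) + #(nonNbrs G A v) := by
  rw [nonEdges_insert G hv, card_union_of_disjoint,
    card_image_of_injective _ fun _ _ => Sym2.congr_right.1]
  simp only [disjoint_right, mem_image]
  rintro _ ⟨w, -, rfl⟩ h
  exact hv (mem_nonEdges.1 h).1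

lemma nonNbrs_union (S T : Finset V) (v : V) :
    nonNbrs G (S ∪ T) v = nonNbrs G S v ∪ nonNbrs G T v := by
  simp only [nonNbrs, erase_union_distrib, filter_union]

lemma nonNbrs_mono {S T : Finset V} (h : S ⊆ T) (v : V) : nonNbrs G S v ⊆ nonNbrs G T v :=
  filter_subset_filter _ (erase_subset_erase v h)

lemma card_nonEdges_union {S T : Finset V} (h : Disjoint S T) :
    #(nonEdges G (S ∪ T)) = #(nonEdges G S) + #(nonEdges G T) + ∑ v ∈ T, #(nonNbrs G S v) := by
  induction T using Finset.induction_on with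
  | empty => simp [nonEdges]
  | insert v T hvT ih =>
    obtain ⟨hvS, hST⟩ : v ∉ S ∧ Disjoint S T := by simpa [disjoint_insert_right] using h
    have hdisj : Disjoint (nonNbrs G S v) (nonNbrs G T v) :=
      hST.mono (filter_subset _ _ |>.trans (erase_subset _ _))
        (filter_subset _ _ |>.trans (erase_subset _ _))
    rw [union_insert, card_nonEdges_insert G (by simp [hvS, hvT]), ih hST,
      card_nonEdges_insert G hvT, sum_insert hvT, nonNbrs_union, card_union_of_disjoint hdisj]
    ring

lemma card_nonEdges_add_sum_le {ι : Type*} [DecidableEq ι] (S : Finset V) (I : Finset ι)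
    (A : ι → Finset V) (hA : (I : Set ι).PairwiseDisjoint A) (hAS : ∀ i ∈ I, Disjoint S (A i)) :
    #(nonEdges G S) + ∑ i ∈ I, (#(nonEdges G (A i)) + ∑ v ∈ A i, #(nonNbrs G S v))
      ≤ #(nonEdges G (S ∪ I.biUnion A)) := by
  induction I using Finset.induction_on with
  | empty => simp
  | insert i I hiI ih =>
    set U := I.biUnion A
    have hUA : Disjoint (S ∪ U) (A i) := by
      refine disjoint_union_left.2 ⟨hAS i (mem_insert_self i I), ?_⟩
      refine disjoint_biUnion_left _ _ _ |>.2 fun j hj => hA ?_ (mem_insert_self i I) ?_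
      · exact mem_insert_of_mem hj
      · rintro rfl; exact hiI hj
    have hS : ∑ v ∈ A i, #(nonNbrs G S v) ≤ ∑ v ∈ A i, #(nonNbrs G (S ∪ U) v) :=
      sum_le_sum fun v _ => card_le_card (nonNbrs_mono G subset_union_left v)
    have ih := ih (hA.subset (by simp)) fun j hj => hAS j (mem_insert_of_mem hj)
    rw [sum_insert hiI, biUnion_insert, show S ∪ (A i ∪ U) = S ∪ U ∪ A i by ac_rfl,
      card_nonEdges_union G hUA]
    omega

lemma card_nonEdges_of_forall_not_adj {T : Finset V} (h : ∀ x ∈ T, ∀ y ∈ T, ¬ G.Adj x y) :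
    #(nonEdges G T) = #T * (#T - 1) / 2 := by
  have hoff : (T ×ˢ T).filter (fun p => p.1 ≠ p.2 ∧ ¬ G.Adj p.1 p.2) = T.offDiag := by
    ext ⟨a, b⟩
    simp only [mem_filter, mem_product, mem_offDiag]
    exact ⟨fun ⟨⟨ha, hb⟩, hne, _⟩ => ⟨ha, hb, hne⟩, fun ⟨ha, hb, hne⟩ => ⟨⟨ha, hb⟩, hne, h a ha b hb⟩⟩
  rw [nonEdges, hoff, ← Nat.choose_two_right]
  exact Sym2.card_image_offDiag T

lemma sum_filter_lt_card_inter_le_sum {n : ℕ} {e : Fin n → V} (he : Function.Injective e)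
    {f : V → ℕ} (hf : Monotone (f ∘ e)) (C : Finset V) :
    ∑ j ∈ univ.filter (fun j : Fin n => (j : ℕ) < #(C ∩ univ.image e)), f (e j)
      ≤ ∑ v ∈ C ∩ univ.image e, f v := by
  have hCe : C ∩ univ.image e = (univ.filter (e · ∈ C)).image e := by
    ext v
    simp only [mem_inter, mem_image, mem_univ, true_and, mem_filter]
    constructor
    · rintro ⟨hv, j, rfl⟩; exact ⟨j, hv, rfl⟩
    · rintro ⟨j, hj, rfl⟩; exact ⟨hj, j, rfl⟩
  rw [hCe, sum_image he.injOn, card_image_of_injective _ he]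
  exact hf.sum_filter_lt_card_le_sum _

end

theorem coloring_nonedge_lower_bound_general (G : SimpleGraph V) [DecidableRel G.Adj]
    (S : Finset V) {c : ℕ} (π : Fin c → Finset V)
    (hdisj : ∀ i j : Fin c, i ≠ j → Disjoint (π i) (π j))
    (hcover : Finset.univ.biUnion π = Finset.univ \ S)
    (hind : ∀ i : Fin c, ∀ x ∈ π i, ∀ y ∈ π i, ¬ G.Adj x y)
    (vfun : (i : Fin c) → Fin ((π i).card) → V)
    (hinj : ∀ i, Function.Injective (vfun i))
    (himg : ∀ i, Finset.image (vfun i) Finset.univ = π i)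
    (hmono : ∀ i, ∀ j₁ j₂ : Fin ((π i).card), j₁ ≤ j₂ →
      (nonNbrs G S (vfun i j₁)).card ≤ (nonNbrs G S (vfun i j₂)).card)
    (C : Finset V) (hSC : S ⊆ C) :
    (nonEdges G S).card
      + ∑ i : Fin c, ((C ∩ π i).card * ((C ∩ π i).card - 1) / 2
          + ∑ j ∈ Finset.univ.filter (fun j : Fin ((π i).card) => (j : ℕ) < (C ∩ π i).card),
              (nonNbrs G S (vfun i j)).card)
      ≤ (nonEdges G C).card := by
  have hSπ : ∀ i, Disjoint S (π i) := fun i =>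
    disjoint_of_subset_right (hcover ▸ subset_biUnion_of_mem π (mem_univ i)) disjoint_sdiff
  have hC : S ∪ univ.biUnion (fun i => C ∩ π i) = C := by
    rw [← inter_biUnion, hcover, ← inter_sdiff_assoc, inter_univ, union_sdiff_of_subset hSC]
  calc _ ≤ #(nonEdges G S) + ∑ i, (#(nonEdges G (C ∩ π i))
          + ∑ v ∈ C ∩ π i, #(nonNbrs G S v)) := by
        gcongr with i
        · exact (card_nonEdges_of_forall_not_adj G fun x hx y hy =>
            hind i x (mem_inter.1 hx).2 y (mem_inter.1 hy).2).ge
        · have := sum_filter_lt_card_inter_le_sum (f := fun v => #(nonNbrs G S v)) (hinj i)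
            (fun a b => hmono i a b) C
          rwa [himg i] at this
    _ ≤ #(nonEdges G (S ∪ univ.biUnion (fun i => C ∩ π i))) :=
        card_nonEdges_add_sum_le G S univ _
          (fun i _ j _ hij => (hdisj i j hij).mono inter_subset_right inter_subset_right)
          (fun i _ => (hSπ i).mono_right inter_subset_right)
    _ = #(nonEdges G C) := by rw [hC]

/-- Let `π 0, …, π (c-1)` be a partition of `V(g) \ S` into independent sets, with each
part `π i` enumerated as `vfun i 0, …, vfun i (|π i| - 1)` in non-decreasing order of
`|N̄_S(·)|`. Then for every `k`-defective clique `C` with `S ⊆ C`, writing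
`s i = |C ∩ π i|`, the number of non-edges of `C` satisfies
`|Ē(C)| ≥ |Ē(S)| + ∑ i, (s i * (s i − 1) / 2 + ∑_{j < s i} |N̄_S(vfun i j)|)`. -/
theorem coloring_nonedge_lower_bound (G : SimpleGraph V) [DecidableRel G.Adj]
    (k : ℕ) (S : Finset V) {c : ℕ} (π : Fin c → Finset V)
    (hdisj : ∀ i j : Fin c, i ≠ j → Disjoint (π i) (π j))
    (hcover : Finset.univ.biUnion π = Finset.univ \ S)
    (hind : ∀ i : Fin c, ∀ x ∈ π i, ∀ y ∈ π i, ¬ G.Adj x y)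
    (vfun : (i : Fin c) → Fin ((π i).card) → V)
    (hinj : ∀ i, Function.Injective (vfun i))
    (himg : ∀ i, Finset.image (vfun i) Finset.univ = π i)
    (hmono : ∀ i, ∀ j₁ j₂ : Fin ((π i).card), j₁ ≤ j₂ →
      (nonNbrs G S (vfun i j₁)).card ≤ (nonNbrs G S (vfun i j₂)).card)
    (C : Finset V) (hSC : S ⊆ C) (hC : (nonEdges G C).card ≤ k) :
    (nonEdges G S).card
      + ∑ i : Fin c, ((C ∩ π i).card * ((C ∩ π i).card - 1) / 2
          + ∑ j ∈ Finset.univ.filter (fun j : Fin ((π i).card) => (j : ℕ) < (C ∩ π i).card),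
              (nonNbrs G S (vfun i j)).card)
      ≤ (nonEdges G C).card :=
  coloring_nonedge_lower_bound_general G S π hdisj hcover hind vfun hinj himg hmono C hSC
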